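/- For every complex w with |Im w| < γ, the series Σ_{n=1}^∞ (2i/n)·sin(2nw)/(1 + e^{2nγ}) converges, the infinite product below converges, and exp( −Σ_{n=1}^∞ (2i/n)·sin(2nw)/(1 + e^{2nγ}) ) = Π_{k=1}^∞ [ (1 − e^{−2((2k−1)γ − iw)})·(1 − e^{−2(2kγ + iw)}) ] / [ (1 − e^{−2((2k−1)γ + iw)})·(1 − e^{−2(2kγ − iw)}) ]. Equivalently, the dressed phase satisfies exp(−φ(x, z)) = e^{−i(π/2 + x − z)}·Π_{k=1}^∞ [ (1 − e^{−2((2k−1)γ − i(x−z))})·(1 − e^{−2(2kγ + i(x−z))}) ] / [ (1 − e^{−2((2k−1)γ + i(x−z))})·(1 − e^{−2(2kγ − i(x−z))}) ] for |Im(x − z)| < γ. -/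

import Mathlib

/-- The dressed phase
`φ(x, z) = i·(π/2 + x − z) + Σ_{n=1}^∞ (2i/n)·sin(2n(x − z))/(1 + e^{2nγ})`. -/
noncomputable def dressedPhase (γ : ℝ) (x z : ℂ) : ℂ :=
  Complex.I * ((Real.pi / 2 : ℝ) + x - z) +
    ∑' n : ℕ, (2 * Complex.I / ((n : ℂ) + 1)) * Complex.sin (2 * ((n : ℂ) + 1) * (x - z)) /
      (1 + (Real.exp (2 * ((n : ℝ) + 1) * γ) : ℂ))

/-- The `k`-th factor (`k = 1, 2, …` encoded as `k : ℕ` with value `k+1`) of the infinite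
product `P(w)` representing `exp` of minus the series part of the dressed phase. -/
noncomputable def phaseProdTerm (γ : ℝ) (w : ℂ) (k : ℕ) : ℂ :=
  ((1 - Complex.exp (-2 * ((2 * (k : ℂ) + 1) * (γ : ℂ) - Complex.I * w))) *
   (1 - Complex.exp (-2 * ((2 * (k : ℂ) + 2) * (γ : ℂ) + Complex.I * w)))) /
  ((1 - Complex.exp (-2 * ((2 * (k : ℂ) + 1) * (γ : ℂ) + Complex.I * w))) *
   (1 - Complex.exp (-2 * ((2 * (k : ℂ) + 2) * (γ : ℂ) - Complex.I * w))))


/-!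
Write `x = e^{2iw}` and `q = e^{-2γ}`; the `n`-th term of the series is
`((x q)^n - (x⁻¹ q)^n) / (n (1 + q^n))`, and `|Im w| < γ` says exactly that `‖x q‖, ‖x⁻¹ q‖ < 1`.
Expanding `1 / (1 + q^n) = ∑_k (-1)^k q^{nk}` gives an absolutely summable double series; summing
it over `n` first turns minus the series into
`∑_k (-1)^k (log (1 - x q^{k+1}) - log (1 - x⁻¹ q^{k+1}))`.
Exponentiating and grouping the terms `k = 2j` and `k = 2j + 1` produces the factors of the product.
-/

open Complex

theorem HasSum.sum_consecutive_pairs {G : Type*} [AddCommGroup G] [UniformSpace G]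
    [IsUniformAddGroup G] [CompleteSpace G] [T2Space G] {f : ℕ → G} {a : G}
    (hf : HasSum f a) : HasSum (fun k => f (2 * k) + f (2 * k + 1)) a := by
  have heven : Summable fun k => f (2 * k) :=
    hf.summable.comp_injective (mul_right_injective₀ two_ne_zero)
  have hodd : Summable fun k => f (2 * k + 1) :=
    hf.summable.comp_injective ((add_left_injective 1).comp (mul_right_injective₀ two_ne_zero))
  rw [← (heven.hasSum.even_add_odd hodd.hasSum).unique hf]
  exact heven.hasSum.add hodd.hasSum

theorem HasSum.hasProd_cexp_sub_pairs {f : ℕ → ℂ} {s : ℂ}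
    (hf : HasSum (fun k => (-1) ^ k * f k) s) :
    HasProd (fun j => cexp (f (2 * j) - f (2 * j + 1))) (cexp s) := by
  convert hf.sum_consecutive_pairs.cexp using 2 with j
  simp [pow_succ, pow_mul, sub_eq_add_neg]

section LambertSeries

variable {q x : ℂ}

theorem norm_mul_pow_succ_lt_one (hq : ‖q‖ ≤ 1) (hx : ‖x * q‖ < 1) (k : ℕ) :
    ‖x * q ^ (k + 1)‖ < 1 :=
  calc ‖x * q ^ (k + 1)‖ = ‖x * q‖ * ‖q‖ ^ k := by
        rw [pow_succ', ← mul_assoc, norm_mul, norm_pow]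
    _ ≤ ‖x * q‖ := mul_le_of_le_one_right (norm_nonneg _) (pow_le_one₀ (norm_nonneg _) hq)
    _ < 1 := hx

theorem summable_alternating_pow_div (hq : ‖q‖ < 1) (hx : ‖x * q‖ < 1) :
    Summable fun p : ℕ × ℕ => (-1) ^ p.2 * (x * q ^ (p.2 + 1)) ^ (p.1 + 1) / (p.1 + 1) := by
  set a := ‖x * q‖
  set b := ‖q‖
  have ha : 0 ≤ a := norm_nonneg _
  have hb : 0 ≤ b := norm_nonneg _
  refine Summable.of_norm_bounded (g := fun p : ℕ × ℕ => a ^ p.1 * b ^ p.2)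
    ((summable_geometric_of_lt_one ha hx).mul_of_nonneg (summable_geometric_of_lt_one hb hq)
      (fun _ => by positivity) (fun _ => by positivity)) ?_
  rintro ⟨n, k⟩
  have hn : (1 : ℝ) ≤ ‖(n : ℂ) + 1‖ := by
    rw [← Nat.cast_add_one, norm_natCast]
    exact_mod_cast Nat.le_add_left 1 n
  calc ‖(-1) ^ k * (x * q ^ (k + 1)) ^ (n + 1) / ((n : ℂ) + 1)‖
      ≤ a ^ (n + 1) * (b ^ k) ^ (n + 1) := by
        rw [norm_div, norm_mul, norm_pow, norm_neg, norm_one, one_pow, one_mul, norm_pow,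
          pow_succ' q, ← mul_assoc, norm_mul, norm_pow, mul_pow]
        exact div_le_self (by positivity) hn
    _ ≤ a ^ n * b ^ k :=
        mul_le_mul (pow_le_pow_of_le_one ha hx.le n.le_succ)
          (pow_le_of_le_one (by positivity) (pow_le_one₀ hb hq.le) n.succ_ne_zero)
          (by positivity) (by positivity)

theorem exists_hasSum_pow_div_one_add_pow_and_alternating_neg_log
    (hq : ‖q‖ < 1) (hx : ‖x * q‖ < 1) :
    ∃ s, HasSum (fun n : ℕ => (x * q) ^ (n + 1) / ((n + 1) * (1 + q ^ (n + 1)))) s ∧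
      HasSum (fun k : ℕ => (-1) ^ k * -log (1 - x * q ^ (k + 1))) s := by
  have hF := (summable_alternating_pow_div hq hx).hasSum
  have hrow : ∀ n : ℕ, HasSum (fun k : ℕ => (-1) ^ k * (x * q ^ (k + 1)) ^ (n + 1) / (n + 1))
      ((x * q) ^ (n + 1) / ((n + 1) * (1 + q ^ (n + 1)))) := by
    intro n
    have hqn : ‖-q ^ (n + 1)‖ < 1 := by
      rw [norm_neg, norm_pow]
      exact pow_lt_one₀ (norm_nonneg _) hq n.succ_ne_zero
    have hgeo := (hasSum_geometric_of_norm_lt_one hqn).mul_left ((x * q) ^ (n + 1) / (n + 1))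
    rw [sub_neg_eq_add, ← div_eq_mul_inv, div_div] at hgeo
    refine hgeo.congr_fun fun k => ?_
    rw [neg_pow (q ^ (n + 1)), pow_right_comm q (n + 1) k]
    ring
  have hcol : ∀ k : ℕ, HasSum (fun n : ℕ => (-1) ^ k * (x * q ^ (k + 1)) ^ (n + 1) / (n + 1))
      ((-1) ^ k * -log (1 - x * q ^ (k + 1))) := by
    intro k
    refine ((hasSum_taylorSeries_neg_log' (norm_mul_pow_succ_lt_one hq.le hx k)).mul_left
      ((-1) ^ k)).congr_fun fun n => ?_
    ring
  exact ⟨_, hF.prod_fiberwise hrow,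
    ((Equiv.prodComm ℕ ℕ).hasSum_iff.mpr hF).prod_fiberwise hcol⟩

theorem exists_hasSum_and_hasProd_of_norm_lt_one {y : ℂ}
    (hq : ‖q‖ < 1) (hx : ‖x * q‖ < 1) (hy : ‖y * q‖ < 1) :
    ∃ s, HasSum (fun n : ℕ =>
        ((x * q) ^ (n + 1) - (y * q) ^ (n + 1)) / ((n + 1) * (1 + q ^ (n + 1)))) s ∧
      HasProd (fun j : ℕ => ((1 - x * q ^ (2 * j + 1)) * (1 - y * q ^ (2 * j + 2))) /
        ((1 - y * q ^ (2 * j + 1)) * (1 - x * q ^ (2 * j + 2)))) (cexp (-s)) := by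
  obtain ⟨s, hsx, hlx⟩ := exists_hasSum_pow_div_one_add_pow_and_alternating_neg_log hq hx
  obtain ⟨t, hsy, hly⟩ := exists_hasSum_pow_div_one_add_pow_and_alternating_neg_log hq hy
  refine ⟨s - t, by simpa only [sub_div] using hsx.sub hsy, ?_⟩
  have hne : ∀ z : ℂ, ‖z * q‖ < 1 → ∀ k : ℕ, 1 - z * q ^ (k + 1) ≠ 0 := fun z hz k h => by
    simpa [← sub_eq_zero.mp h] using norm_mul_pow_succ_lt_one hq.le hz k
  have hlog : HasSum (fun k : ℕ => (-1) ^ k *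
      (log (1 - x * q ^ (k + 1)) - log (1 - y * q ^ (k + 1)))) (-(s - t)) := by
    rw [neg_sub]
    exact (hly.sub hlx).congr_fun fun k => by ring
  convert hlog.hasProd_cexp_sub_pairs using 2 with j
  rw [exp_sub, exp_sub, exp_sub, exp_log (hne x hx _), exp_log (hne y hy _),
    exp_log (hne x hx _), exp_log (hne y hy _)]
  field_simp [hne x hx (2 * j + 1), hne y hy (2 * j)]

end LambertSeries

theorem dressedPhase_summand_eq (γ : ℝ) (w : ℂ) (n : ℕ) :
    2 * I / ((n : ℂ) + 1) * sin (2 * ((n : ℂ) + 1) * w) /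
        (1 + (Real.exp (2 * ((n : ℝ) + 1) * γ) : ℂ)) =
      ((cexp (2 * I * w) * cexp (-2 * γ)) ^ (n + 1) -
          (cexp (-2 * I * w) * cexp (-2 * γ)) ^ (n + 1)) /
        ((n + 1) * (1 + cexp (-2 * γ) ^ (n + 1))) := by
  have hG : 1 + (Real.exp (2 * ((n : ℝ) + 1) * γ) : ℂ) ≠ 0 := by
    exact_mod_cast (by positivity : (0 : ℝ) < 1 + Real.exp _).ne'
  simp only [← exp_nat_mul, ← exp_add, sin, ofReal_exp] at hG ⊢
  push_cast at hG ⊢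
  rw [show ((n : ℂ) + 1) * (2 * I * w + -2 * γ) = 2 * (n + 1) * w * I + -(2 * (n + 1) * γ) by ring,
    show ((n : ℂ) + 1) * (-2 * I * w + -2 * γ) = -(2 * (n + 1) * w) * I + -(2 * (n + 1) * γ) by
      ring,
    show ((n : ℂ) + 1) * (-2 * γ) = -(2 * (n + 1) * γ) by ring, exp_add, exp_add, exp_neg]
  field_simp
  rw [I_sq, add_comm (cexp _) 1, mul_div_cancel_left₀ _ hG]
  ring

theorem phaseProdTerm_eq (γ : ℝ) (w : ℂ) (j : ℕ) :
    phaseProdTerm γ w j =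
      ((1 - cexp (2 * I * w) * cexp (-2 * γ) ^ (2 * j + 1)) *
          (1 - cexp (-2 * I * w) * cexp (-2 * γ) ^ (2 * j + 2))) /
        ((1 - cexp (-2 * I * w) * cexp (-2 * γ) ^ (2 * j + 1)) *
          (1 - cexp (2 * I * w) * cexp (-2 * γ) ^ (2 * j + 2))) := by
  simp only [phaseProdTerm, ← exp_nat_mul, ← exp_add]
  push_cast
  ring_nf

theorem norm_cexp_lt_one {z : ℂ} (hz : z.re < 0) : ‖cexp z‖ < 1 := by
  rwa [norm_exp, Real.exp_lt_one_iff]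

/-- For `|Im w| < γ` the series part of the dressed phase is summable, the infinite product
`P(w)` converges, and `exp(−Σ) = P(w)`; equivalently
`exp(−φ(x,z)) = e^{−i(π/2 + x − z)}·P(x − z)` whenever `|Im(x − z)| < γ`. -/
theorem dressedPhase_product_representation (γ : ℝ) (hγ : 0 < γ) (w : ℂ) (hw : |w.im| < γ) :
    Summable (fun n : ℕ => (2 * Complex.I / ((n : ℂ) + 1)) *
      Complex.sin (2 * ((n : ℂ) + 1) * w) / (1 + (Real.exp (2 * ((n : ℝ) + 1) * γ) : ℂ))) ∧
    Multipliable (phaseProdTerm γ w) ∧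
    Complex.exp (-(∑' n : ℕ, (2 * Complex.I / ((n : ℂ) + 1)) *
        Complex.sin (2 * ((n : ℂ) + 1) * w) / (1 + (Real.exp (2 * ((n : ℝ) + 1) * γ) : ℂ)))) =
      ∏' k : ℕ, phaseProdTerm γ w k ∧
    (∀ x z : ℂ, x - z = w →
      Complex.exp (-dressedPhase γ x z) =
        Complex.exp (-(Complex.I * ((Real.pi / 2 : ℝ) + x - z))) *
          ∏' k : ℕ, phaseProdTerm γ (x - z) k) := by
  have hq : ‖cexp (-2 * γ)‖ < 1 := norm_cexp_lt_one (by simpa using hγ)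
  have hxy : ‖cexp (2 * I * w) * cexp (-2 * γ)‖ < 1 ∧
      ‖cexp (-2 * I * w) * cexp (-2 * γ)‖ < 1 := by
    obtain ⟨hw_lo, hw_hi⟩ := abs_lt.mp hw
    constructor <;>
    · rw [← exp_add]
      refine norm_cexp_lt_one ?_
      simp only [add_re, mul_re, mul_im, neg_re, neg_im, ofReal_re, ofReal_im, I_re, I_im,
        re_ofNat, im_ofNat]
      linarith
  obtain ⟨s, hs, hp⟩ := exists_hasSum_and_hasProd_of_norm_lt_one hq hxy.1 hxy.2
  simp only [← dressedPhase_summand_eq] at hs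
  simp only [← phaseProdTerm_eq] at hp
  refine ⟨hs.summable, hp.multipliable, by rw [hs.tsum_eq, hp.tprod_eq], fun x z hxz => ?_⟩
  rw [dressedPhase, neg_add, exp_add, hxz, hs.tsum_eq, hp.tprod_eq]
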